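/- Assume the Harnack inequality: for every nonnegative solution w of the linear equation ∂ₜw − ν∂ₓ²w + ∂ₓ(aw) = 0 on [0,T] × S one has θ · max_x w(T/2, x) ≤ min_x w(T, x) for some θ ∈ (0,1], and assume the L¹ norm of any solution is nonincreasing in time. Let w₀ ∈ L¹(S) have zero mean, decompose w₀ = w₀⁺ − w₀⁻ into positive and negative parts, let w^± be the solutions with initial data w₀^±, and w = w⁺ − w⁻. Then |w(T)|_{L¹} ≤ q |w₀|_{L¹} with q = max{1/2, 1 − θ/2}. -/

import Mathlib

open Real intervalIntegral

/-!
The Harnack inequality bounds both `w⁺(T)` and `w⁻(T)` from below by `θ m(T/2)`, where `m` is their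
common mass. Since `|a - b| ≤ a + b - 2c` whenever `a, b ≥ c`, this removes `2θ m(T/2)` from the
trivial bound `|w(T)|₁ ≤ 2 m(T)`, and monotonicity of the masses together with `|w₀|₁ = 2 m(0)`
gives `|w(T)|₁ ≤ (1 - θ) |w₀|₁`.
-/

open MeasureTheory

theorem abs_sub_le_add_sub_two_mul {a b c : ℝ} (ha : c ≤ a) (hb : c ≤ b) :
    |a - b| ≤ a + b - 2 * c := by
  rw [abs_le]
  constructor <;> linarith

section IntervalIntegral

variable {a b : ℝ} {f g : ℝ → ℝ}

theorem mul_integral_le_of_forall_mul_le (hab : a ≤ b) (hf : IntervalIntegrable f volume a b)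
    {θ c : ℝ} (h : ∀ x, θ * f x ≤ c) : θ * ∫ x in a..b, f x ≤ (b - a) * c := by
  rw [← intervalIntegral.integral_const_mul, ← smul_eq_mul (b - a), ← intervalIntegral.integral_const]
  exact integral_mono_on hab (hf.const_mul θ) intervalIntegrable_const fun x _ => h x

theorem integral_abs_sub_le_of_forall_le (hab : a ≤ b) (hf : IntervalIntegrable f volume a b)
    (hg : IntervalIntegrable g volume a b) {c : ℝ} (hcf : ∀ x, c ≤ f x) (hcg : ∀ x, c ≤ g x) :
    ∫ x in a..b, |f x - g x| ≤ (∫ x in a..b, f x) + (∫ x in a..b, g x) - 2 * ((b - a) * c) := by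
  calc ∫ x in a..b, |f x - g x| ≤ ∫ x in a..b, (f x + g x - 2 * c) :=
        integral_mono_on hab (hf.sub hg).abs ((hf.add hg).sub intervalIntegrable_const)
          fun x _ => abs_sub_le_add_sub_two_mul (hcf x) (hcg x)
    _ = (∫ x in a..b, f x) + (∫ x in a..b, g x) - 2 * ((b - a) * c) := by
        rw [integral_sub (hf.add hg) intervalIntegrable_const, integral_add hf hg,
          intervalIntegral.integral_const, smul_eq_mul]
        ring

theorem integral_abs_eq_integral_add_integral {w₀ u v : ℝ → ℝ}
    (hu : IntervalIntegrable u volume a b) (hv : IntervalIntegrable v volume a b)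
    (hu₀ : ∀ x, u x = max (w₀ x) 0) (hv₀ : ∀ x, v x = max (-w₀ x) 0) :
    ∫ x in a..b, |w₀ x| = (∫ x in a..b, u x) + ∫ x in a..b, v x := by
  rw [← integral_add hu hv]
  congr with x
  rw [hu₀, hv₀, max_zero_add_max_neg_zero_eq_abs_self]

end IntervalIntegral

theorem harnack_contraction_general
    (T θ : ℝ) (hT : 0 < T) (hθ : 0 < θ) (hθ1 : θ ≤ 1)
    (w₀ : ℝ → ℝ) (wp wm : ℝ → ℝ → ℝ)
    (hint : ∀ t, IntervalIntegrable (wp t) MeasureTheory.volume 0 1 ∧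
                 IntervalIntegrable (wm t) MeasureTheory.volume 0 1)
    (hinitp : ∀ x, wp 0 x = max (w₀ x) 0)
    (hinitm : ∀ x, wm 0 x = max (-(w₀ x)) 0)
    -- Harnack inequality for the nonnegative solutions w⁺ and w⁻ :
    (hharnackp : ∀ x y, θ * wp (T/2) x ≤ wp T y)
    (hharnackm : ∀ x y, θ * wm (T/2) x ≤ wm T y)
    -- equality of masses (zero mean of w) :
    (hmass : ∀ t, (∫ x in (0:ℝ)..1, wp t x) = ∫ x in (0:ℝ)..1, wm t x)
    -- L¹ non-expansion for w⁺, w⁻ and their difference :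
    (hnexp : ∀ s t : ℝ, s ≤ t → (∫ x in (0:ℝ)..1, wp t x) ≤ (∫ x in (0:ℝ)..1, wp s x) ∧
        (∫ x in (0:ℝ)..1, wm t x) ≤ ∫ x in (0:ℝ)..1, wm s x) :
    (∫ x in (0:ℝ)..1, |wp T x - wm T x|) ≤
      max (1/2) (1 - θ/2) * ∫ x in (0:ℝ)..1, |w₀ x| := by
  set m : ℝ → ℝ := fun t => ∫ x in (0:ℝ)..1, wp t x
  have hlowp (y : ℝ) : θ * m (T/2) ≤ wp T y := by
    simpa using mul_integral_le_of_forall_mul_le zero_le_one (hint (T/2)).1 (hharnackp · y)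
  have hlowm (y : ℝ) : θ * m (T/2) ≤ wm T y := by
    simpa [m, hmass] using
      mul_integral_le_of_forall_mul_le zero_le_one (hint (T/2)).2 (hharnackm · y)
  have hT_bound : ∫ x in (0:ℝ)..1, |wp T x - wm T x| ≤ 2 * m T - 2 * (θ * m (T/2)) := by
    have := integral_abs_sub_le_of_forall_le zero_le_one (hint T).1 (hint T).2 hlowp hlowm
    simp only [← hmass T, sub_zero, one_mul] at this
    linarith
  have h₀ : ∫ x in (0:ℝ)..1, |w₀ x| = 2 * m 0 := by
    rw [integral_abs_eq_integral_add_integral (hint 0).1 (hint 0).2 hinitp hinitm, ← hmass 0]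
    ring
  have hm₀ : 0 ≤ m 0 := by
    have := integral_nonneg (μ := volume) zero_le_one fun x _ => abs_nonneg (w₀ x)
    linarith
  have hmT : m T ≤ m (T/2) := (hnexp (T/2) T (by linarith)).1
  have hmT2 : m (T/2) ≤ m 0 := (hnexp 0 (T/2) (by linarith)).1
  have hq : 1 - θ ≤ max (1/2) (1 - θ/2) := le_max_of_le_right (by linarith)
  rw [h₀]
  calc ∫ x in (0:ℝ)..1, |wp T x - wm T x| ≤ (1 - θ) * (2 * m 0) := by
        nlinarith [mul_le_mul_of_nonneg_left hmT2 (sub_nonneg.2 hθ1)]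
    _ ≤ max (1/2) (1 - θ/2) * (2 * m 0) := by gcongr

/-- the Harnack inequality together with L¹ non-expansion yields the
contraction `|w(T)|₁ ≤ max{1/2, 1 − θ/2} |w₀|₁` for the decomposition
`w = w⁺ − w⁻` into evolutions of the positive and negative parts. -/
theorem harnack_contraction
    (T θ : ℝ) (hT : 0 < T) (hθ : 0 < θ) (hθ1 : θ ≤ 1)
    (w₀ : ℝ → ℝ) (wp wm : ℝ → ℝ → ℝ)
    (hint : ∀ t, IntervalIntegrable (wp t) MeasureTheory.volume 0 1 ∧
                 IntervalIntegrable (wm t) MeasureTheory.volume 0 1)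
    (hint0 : IntervalIntegrable w₀ MeasureTheory.volume 0 1)
    (hinitp : ∀ x, wp 0 x = max (w₀ x) 0)
    (hinitm : ∀ x, wm 0 x = max (-(w₀ x)) 0)
    (hnonneg : ∀ t x, 0 ≤ wp t x ∧ 0 ≤ wm t x)
    -- Harnack inequality for the nonnegative solutions w⁺ and w⁻ :
    (hharnackp : ∀ x y, θ * wp (T/2) x ≤ wp T y)
    (hharnackm : ∀ x y, θ * wm (T/2) x ≤ wm T y)
    -- equality of masses (zero mean of w) :
    (hmass : ∀ t, (∫ x in (0:ℝ)..1, wp t x) = ∫ x in (0:ℝ)..1, wm t x)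
    -- L¹ non-expansion for w⁺, w⁻ and their difference :
    (hnexp : ∀ s t : ℝ, s ≤ t → (∫ x in (0:ℝ)..1, wp t x) ≤ (∫ x in (0:ℝ)..1, wp s x) ∧
        (∫ x in (0:ℝ)..1, wm t x) ≤ ∫ x in (0:ℝ)..1, wm s x)
    (hnexpd : ∀ s t : ℝ, s ≤ t →
        (∫ x in (0:ℝ)..1, |wp t x - wm t x|) ≤ ∫ x in (0:ℝ)..1, |wp s x - wm s x|) :
    (∫ x in (0:ℝ)..1, |wp T x - wm T x|) ≤
      max (1/2) (1 - θ/2) * ∫ x in (0:ℝ)..1, |w₀ x| :=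
  harnack_contraction_general T θ hT hθ hθ1 w₀ wp wm hint hinitp hinitm hharnackp hharnackm hmass
    hnexp
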